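/- arXiv:2411.09721 — 4 statements merged into one kernel-verified Lean document; each statement's English description precedes it below -/
import Mathlib

section
/- Let x̄₀ ∈ (0,1) satisfy φ(x̄₀) = x̄₀. The Jacobian of the two-cell reduced system at the homogeneous state (x̄₀, x̄₀), i.e. the real 2×2 matrix with both diagonal entries equal to f′(x̄₀)g(x̄₀) − 1 and both off-diagonal entries equal to f(x̄₀)g′(x̄₀), has a positive real eigenvalue if and only if f(x̄₀)g′(x̄₀) − f′(x̄₀)g(x̄₀) < −1. -/
/-- The Hill-type function `f(x) = 1/(a + x^k)` of the reduced Hes1–Notch model. -/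
noncomputable def fHill (a : ℝ) (k : ℕ) : ℝ → ℝ := fun x => 1 / (a + x ^ k)

/-- The Hill-type function `g(x) = 1/(1 + b·x^h)` of the reduced Hes1–Notch model. -/
noncomputable def gHill (b : ℝ) (h : ℕ) : ℝ → ℝ := fun x => 1 / (1 + b * x ^ h)

/-- The Jacobian of the two-cell periodic reduced Hes1–Notch system at the homogeneous
stationary state `(x̄₀, x̄₀)` (diagonal entries `f′(x̄₀)g(x̄₀) − 1`, off-diagonal entries
`f(x̄₀)g′(x̄₀)`) has a positive real eigenvalue if and only if
`f(x̄₀)g′(x̄₀) − f′(x̄₀)g(x̄₀) < −1`. -/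
theorem homogeneous_state_unstable_iff
    (a b : ℝ) (ha : 0 < a) (hb : 0 < b) (k h : ℕ) (hk : 1 ≤ k) (hh : 1 ≤ h)
    (x0 : ℝ) (hx0 : x0 ∈ Set.Ioo (0 : ℝ) 1)
    (hfix : fHill a k x0 * gHill b h x0 = x0) :
    (∃ t : ℝ, 0 < t ∧
      (Matrix.charpoly
        !![deriv (fHill a k) x0 * gHill b h x0 - 1, fHill a k x0 * deriv (gHill b h) x0;
           fHill a k x0 * deriv (gHill b h) x0, deriv (fHill a k) x0 * gHill b h x0 - 1]).IsRoot t)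
    ↔ fHill a k x0 * deriv (gHill b h) x0 - deriv (fHill a k) x0 * gHill b h x0 < -1 := by
  obtain ⟨hx0p, hx0l⟩ := hx0
  have hdf : 0 < a + x0 ^ k := by positivity
  have hdg : 0 < 1 + b * x0 ^ h := by positivity
  have hF : 0 < fHill a k x0 := by
    simp only [fHill]; positivity
  have hG : 0 < gHill b h x0 := by
    simp only [gHill]; positivity
  have hfe : fHill a k = fun x => (a + x ^ k)⁻¹ := by
    funext x; simp [fHill, one_div]
  have hge : gHill b h = fun x => (1 + b * x ^ h)⁻¹ := by
    funext x; simp [gHill, one_div]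
  have hdfder : HasDerivAt (fHill a k) (-(↑k * x0 ^ (k - 1)) / (a + x0 ^ k) ^ 2) x0 := by
    rw [hfe]
    exact (((hasDerivAt_pow k x0).const_add a).inv hdf.ne')
  have hdgder : HasDerivAt (gHill b h)
      (-(b * (↑h * x0 ^ (h - 1))) / (1 + b * x0 ^ h) ^ 2) x0 := by
    rw [hge]
    exact ((((hasDerivAt_pow h x0).const_mul b).const_add 1).inv hdg.ne')
  have hf' : deriv (fHill a k) x0 < 0 := by
    rw [hdfder.deriv, neg_div]
    have hkpos : (0:ℝ) < (k:ℝ) := by exact_mod_cast hk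
    have : 0 < x0 ^ (k - 1) := by positivity
    have : 0 < (↑k * x0 ^ (k - 1)) / (a + x0 ^ k) ^ 2 := by positivity
    linarith [this]
  have hg' : deriv (gHill b h) x0 < 0 := by
    rw [hdgder.deriv, neg_div]
    have hhpos : (0:ℝ) < (h:ℝ) := by exact_mod_cast hh
    have : 0 < (b * (↑h * x0 ^ (h - 1))) / (1 + b * x0 ^ h) ^ 2 := by positivity
    linarith [this]
  set d : ℝ := deriv (fHill a k) x0 * gHill b h x0 - 1 with hd
  set o : ℝ := fHill a k x0 * deriv (gHill b h) x0 with ho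
  have hdo : d + o < 0 := by
    have h1 : deriv (fHill a k) x0 * gHill b h x0 < 0 := mul_neg_of_neg_of_pos hf' hG
    have h2 : fHill a k x0 * deriv (gHill b h) x0 < 0 := mul_neg_of_pos_of_neg hF hg'
    simp only [hd, ho]; linarith
  have hroot : ∀ t : ℝ, (Matrix.charpoly !![d, o; o, d]).IsRoot t ↔
      (t - (d + o)) * (t - (d - o)) = 0 := by
    intro t
    rw [Matrix.charpoly, Matrix.det_fin_two]
    simp [Matrix.charmatrix_apply_eq, Matrix.charmatrix_apply_ne, Polynomial.IsRoot]
    constructor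
    · intro hE
      exact mul_eq_zero.mp (show (t - (d + o)) * (t - (d - o)) = 0 by nlinarith)
    · rintro (h1 | h1) <;> rw [sub_eq_zero] at h1 <;> subst h1 <;> ring
  constructor
  · rintro ⟨t, ht, hroot'⟩
    rw [hroot t, mul_eq_zero] at hroot'
    have htd : t = d - o := by
      rcases hroot' with h1 | h1
      · exfalso; have : t = d + o := by linarith
        linarith
      · linarith
    have : 0 < d - o := htd ▸ ht
    simp only [hd, ho] at this; linarith
  · intro hlt
    refine ⟨d - o, ?_, ?_⟩
    · simp only [hd, ho]; linarith
    · rw [hroot]; ring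
end

section
/- Let x̄₀ ∈ (0,1) satisfy φ(x̄₀) = x̄₀ and assume condition (cond0): f(x̄₀)g′(x̄₀) − f′(x̄₀)g(x̄₀) < −1. Then there exist x̄₁, x̄₂ with 0 < x̄₁ < x̄₀ < x̄₂ < 1 satisfying x̄₁ = g(x̄₂)f(x̄₁) and x̄₂ = g(x̄₁)f(x̄₂); that is, the two-cell periodic reduced system has a non-homogeneous stationary state. -/
/-!
Stationary states of the two-cell system are the solutions of `x₁ = F x₂`, `x₂ = F x₁`, where
`F = Φ⁻¹ ∘ g` and `Φ x = x / f x`: they are the points of period two of the decreasing map `F`,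
and `x̄₀` is its fixed point. Condition (cond0) says exactly that `F'(x̄₀) < -1`. Hence
`F ∘ F - id` has slope `F'(x̄₀)² - 1 > 0` at `x̄₀`, so it is negative just left of `x̄₀`,
while it is positive at `0`. The intermediate value theorem gives `x̄₁ ∈ (0, x̄₀)`, and
`x̄₂ = F x̄₁ > F x̄₀ = x̄₀`.
-/

open Set Filter Topology

lemma HasDerivAt.eventually_neg_nhdsLT {G : ℝ → ℝ} {b d : ℝ} (hG : HasDerivAt G d b)
    (hd : 0 < d) (hGb : G b = 0) : ∀ᶠ y in 𝓝[<] b, G y < 0 := by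
  filter_upwards [(hasDerivAt_iff_tendsto_slope_left_right.mp hG).1.eventually
    (eventually_gt_nhds hd), self_mem_nhdsWithin] with y hslope hy
  exact neg_of_slope_pos hy hslope hGb

lemma exists_mem_Ioo_eq_zero_of_hasDerivAt_pos {G : ℝ → ℝ} {a b d : ℝ} (hab : a < b)
    (hcont : ContinuousOn G (Icc a b)) (hGa : 0 < G a) (hGb : G b = 0) (hG : HasDerivAt G d b)
    (hd : 0 < d) : ∃ c ∈ Ioo a b, G c = 0 := by
  obtain ⟨y, hGy, hya, hyb⟩ :=
    ((hG.eventually_neg_nhdsLT hd hGb).and (Ioo_mem_nhdsLT hab)).exists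
  obtain ⟨c, ⟨hac, hcy⟩, hGc⟩ := intermediate_value_Icc' hya.le
    (hcont.mono (Icc_subset_Icc_right hyb.le)) ⟨hGy.le, hGa.le⟩
  refine ⟨c, ⟨hac.lt_of_ne ?_, hcy.trans_lt hyb⟩, hGc⟩
  rintro rfl
  exact hGa.ne' hGc

theorem exists_mem_Ioo_comp_self_eq_of_hasDerivAt_lt_neg_one {F : ℝ → ℝ} {x₀ s : ℝ}
    (hx₀ : 0 < x₀) (hcont : ContinuousOn F (Ici 0)) (hpos : ∀ w, 0 ≤ w → 0 < F w)
    (hfix : F x₀ = x₀) (hF : HasDerivAt F s x₀) (hs : s < -1) :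
    ∃ x ∈ Ioo 0 x₀, F (F x) = x := by
  have hmaps : MapsTo F (Ici 0) (Ici 0) := fun w hw => (hpos w hw).le
  have hFF : HasDerivAt (fun w => F (F w) - w) (s * s - 1) x₀ :=
    ((hfix.symm ▸ hF).comp x₀ hF).sub (hasDerivAt_id x₀)
  obtain ⟨x, hx, hFFx⟩ := exists_mem_Ioo_eq_zero_of_hasDerivAt_pos hx₀
    (((hcont.comp hcont hmaps).sub continuousOn_id).mono Icc_subset_Ici_self)
    (by simpa using hpos _ (hmaps self_mem_Ici)) (by simp [hfix]) hFF (by nlinarith)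
  exact ⟨x, hx, sub_eq_zero.mp hFFx⟩

section Hill

variable {a b x w : ℝ} {k h : ℕ}

lemma gHill_pos (hb : 0 ≤ b) (hw : 0 ≤ w) : 0 < gHill b h w := by
  unfold gHill; positivity

lemma gHill_le_one (hb : 0 ≤ b) (hw : 0 ≤ w) : gHill b h w ≤ 1 := by
  unfold gHill
  rw [div_le_one (by positivity)]
  exact le_add_of_nonneg_right (by positivity)

lemma gHill_strictAntiOn (hb : 0 < b) (hh : h ≠ 0) : StrictAntiOn (gHill b h) (Ici 0) := by
  intro x (hx : 0 ≤ x) y (hy : 0 ≤ y) hxy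
  unfold gHill
  gcongr

lemma continuousOn_gHill (hb : 0 ≤ b) : ContinuousOn (gHill b h) (Ici 0) := by
  unfold gHill
  exact continuousOn_const.div (by fun_prop) fun x (hx : 0 ≤ x) => by positivity

lemma hasDerivAt_gHill (hx : 1 + b * x ^ h ≠ 0) :
    HasDerivAt (gHill b h) (-(b * (h * x ^ (h - 1))) / (1 + b * x ^ h) ^ 2) x :=
  ((hasDerivAt_const x (1 : ℝ)).fun_div
    (((hasDerivAt_pow h x).const_mul b).const_add 1) hx).congr_deriv (by ring)

lemma hasDerivAt_fHill (hx : a + x ^ k ≠ 0) :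
    HasDerivAt (fHill a k) (-(k * x ^ (k - 1)) / (a + x ^ k) ^ 2) x :=
  ((hasDerivAt_const x (1 : ℝ)).fun_div
    ((hasDerivAt_pow k x).const_add a) hx).congr_deriv (by ring)

/-- `x ↦ x / fHill a k x`, extended oddly to `x < 0` to make it an order isomorphism of `ℝ`. -/
noncomputable def hillProd (a : ℝ) (k : ℕ) (x : ℝ) : ℝ := x * (a + |x| ^ k)

lemma hillProd_of_nonneg (hx : 0 ≤ x) : hillProd a k x = x * (a + x ^ k) := by
  rw [hillProd, abs_of_nonneg hx]

lemma hillProd_strictMono (ha : 0 < a) : StrictMono (hillProd a k) := by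
  refine strictMono_of_odd_strictMonoOn_nonneg (fun x => by simp [hillProd]) ?_
  intro x (hx : 0 ≤ x) y (hy : 0 ≤ y) hxy
  rw [hillProd_of_nonneg hx, hillProd_of_nonneg hy]
  exact mul_lt_mul hxy (by gcongr) (by positivity) hy

lemma hillProd_surjective (ha : 0 < a) : Function.Surjective (hillProd a k) := by
  refine Continuous.surjective (by unfold hillProd; fun_prop) ?_ ?_
  · refine tendsto_atTop_mono' _ ?_ (tendsto_id.const_mul_atTop ha)
    filter_upwards [eventually_ge_atTop 0] with x hx
    rw [hillProd_of_nonneg hx, id]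
    nlinarith [pow_nonneg hx k]
  · refine tendsto_atBot_mono' _ ?_ (tendsto_id.const_mul_atBot ha)
    filter_upwards [eventually_le_atBot 0] with x hx
    rw [hillProd, id]
    nlinarith [pow_nonneg (abs_nonneg x) k]

lemma hasDerivAt_hillProd (hx : 0 < x) :
    HasDerivAt (hillProd a k) (a + (k + 1) * x ^ k) x := by
  have hpoly : HasDerivAt (fun y => a * y + y ^ (k + 1)) (a + (k + 1) * x ^ k) x := by
    simpa using ((hasDerivAt_id x).const_mul a).fun_add (hasDerivAt_pow (k + 1) x)
  refine hpoly.congr_of_eventuallyEq ?_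
  filter_upwards [Ioi_mem_nhds hx] with y hy
  rw [hillProd_of_nonneg (le_of_lt hy)]
  ring

lemma deriv_gHill_div_lt_neg_one (ha : 0 < a) (hx : 0 < x)
    (hfix : fHill a k x * gHill b h x = x)
    (hcond : fHill a k x * deriv (gHill b h) x - deriv (fHill a k) x * gHill b h x < -1) :
    deriv (gHill b h) x / (a + (k + 1) * x ^ k) < -1 := by
  have hP : 0 < a + x ^ k := by positivity
  have hf' : deriv (fHill a k) x = -(k * x ^ (k - 1)) * fHill a k x ^ 2 := by
    rw [(hasDerivAt_fHill hP.ne').deriv, fHill, one_div, inv_pow, div_eq_mul_inv]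
  have hkx : (k : ℝ) * x ^ (k - 1) * x = k * x ^ k := by
    rcases k with _ | k <;> simp [pow_succ, mul_assoc]
  have hfP : fHill a k x * (a + x ^ k) = 1 := one_div_mul_cancel hP.ne'
  have hf : 0 < fHill a k x := one_div_pos.mpr hP
  rw [hf'] at hcond
  -- at the fixed point `f Φ' = 1 - g f'`, so (cond0) says `f g' < -f Φ'`
  have hΦ : fHill a k x * (-1 * (a + (k + 1) * x ^ k)) =
      -1 - k * x ^ (k - 1) * fHill a k x ^ 2 * gHill b h x := by
    linear_combination (-1) * hfP + fHill a k x * hkx + fHill a k x * (k * x ^ (k - 1)) * hfix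
  rw [div_lt_iff₀ (by positivity), ← mul_lt_mul_iff_right₀ hf, hΦ]
  linarith

noncomputable def hillProdIso (a : ℝ) (k : ℕ) (ha : 0 < a) : ℝ ≃o ℝ :=
  StrictMono.orderIsoOfSurjective (hillProd a k) (hillProd_strictMono ha) (hillProd_surjective ha)

/-- The stationary level of a cell whose neighbour is at level `w ≥ 0`: the unique `x ≥ 0` with
`x = gHill b h w * fHill a k x`. -/
noncomputable def steadyResponse (a b : ℝ) (k h : ℕ) (ha : 0 < a) (w : ℝ) : ℝ :=
  (hillProdIso a k ha).symm (gHill b h w)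

variable (ha : 0 < a)

lemma hillProd_steadyResponse : hillProd a k (steadyResponse a b k h ha w) = gHill b h w :=
  (hillProdIso a k ha).apply_symm_apply _

lemma steadyResponse_eq_iff (hx : 0 ≤ x) :
    steadyResponse a b k h ha w = x ↔ x = gHill b h w * fHill a k x := by
  have hP : 0 < a + x ^ k := by positivity
  rw [← (hillProd_strictMono ha).injective.eq_iff, hillProd_steadyResponse,
    hillProd_of_nonneg hx, fHill, mul_one_div, eq_div_iff hP.ne', eq_comm]

lemma steadyResponse_pos (hb : 0 ≤ b) (hw : 0 ≤ w) : 0 < steadyResponse a b k h ha w := by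
  rw [← (hillProd_strictMono ha).lt_iff_lt, hillProd_steadyResponse, hillProd_of_nonneg le_rfl,
    zero_mul]
  exact gHill_pos hb hw

lemma steadyResponse_lt_one (hb : 0 ≤ b) (hw : 0 ≤ w) : steadyResponse a b k h ha w < 1 := by
  rw [← (hillProd_strictMono ha).lt_iff_lt, hillProd_steadyResponse,
    hillProd_of_nonneg zero_le_one]
  linarith [gHill_le_one (h := h) hb hw, one_pow (M := ℝ) k]

lemma steadyResponse_strictAntiOn (hb : 0 < b) (hh : h ≠ 0) :
    StrictAntiOn (steadyResponse a b k h ha) (Ici 0) := fun _ hx _ hy hxy =>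
  (hillProdIso a k ha).symm.strictMono (gHill_strictAntiOn hb hh hx hy hxy)

lemma continuousOn_steadyResponse (hb : 0 ≤ b) :
    ContinuousOn (steadyResponse a b k h ha) (Ici 0) :=
  (hillProdIso a k ha).symm.continuous.comp_continuousOn (continuousOn_gHill hb)

lemma hasDerivAt_steadyResponse (hb : 0 ≤ b) (hw : 0 ≤ w) :
    HasDerivAt (steadyResponse a b k h ha)
      (deriv (gHill b h) w / (a + (k + 1) * steadyResponse a b k h ha w ^ k)) w := by
  have hy := steadyResponse_pos ha (k := k) (h := h) hb hw
  have hinv := HasDerivAt.of_local_left_inverse (hillProdIso a k ha).symm.continuous.continuousAt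
    (hasDerivAt_hillProd hy) (by positivity)
    (Eventually.of_forall (hillProdIso a k ha).apply_symm_apply)
  have hg : HasDerivAt (gHill b h) (deriv (gHill b h) w) w :=
    (hasDerivAt_gHill (by positivity)).differentiableAt.hasDerivAt
  rw [div_eq_inv_mul]
  exact hinv.comp w hg

end Hill

theorem nonhomogeneous_stationary_state_exists_general
    (a b : ℝ) (ha : 0 < a) (hb : 0 < b) (k h : ℕ) (hh : 1 ≤ h)
    (x0 : ℝ) (hx0 : x0 ∈ Set.Ioo (0 : ℝ) 1)
    (hfix : fHill a k x0 * gHill b h x0 = x0)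
    (hcond : fHill a k x0 * deriv (gHill b h) x0 - deriv (fHill a k) x0 * gHill b h x0 < -1) :
    ∃ x1 x2 : ℝ, 0 < x1 ∧ x1 < x0 ∧ x0 < x2 ∧ x2 < 1 ∧
      x1 = gHill b h x2 * fHill a k x1 ∧ x2 = gHill b h x1 * fHill a k x2 := by
  obtain ⟨hx0, -⟩ := hx0
  have hFx0 : steadyResponse a b k h ha x0 = x0 :=
    (steadyResponse_eq_iff ha hx0.le).mpr (by rw [mul_comm, hfix])
  have hF := hasDerivAt_steadyResponse (k := k) (h := h) ha hb.le hx0.le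
  rw [hFx0] at hF
  set F := steadyResponse a b k h ha
  obtain ⟨x1, ⟨hx1, hx1x0⟩, hFFx1⟩ := exists_mem_Ioo_comp_self_eq_of_hasDerivAt_lt_neg_one hx0
    (continuousOn_steadyResponse ha hb.le) (fun w => steadyResponse_pos ha hb.le) hFx0 hF
    (deriv_gHill_div_lt_neg_one ha hx0 hfix hcond)
  have hFx1 : 0 < F x1 := steadyResponse_pos ha hb.le hx1.le
  refine ⟨x1, F x1, hx1, hx1x0, ?_, steadyResponse_lt_one ha hb.le hx1.le,
    (steadyResponse_eq_iff ha hx1.le).mp hFFx1, (steadyResponse_eq_iff ha hFx1.le).mp rfl⟩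
  calc x0 = F x0 := hFx0.symm
    _ < F x1 :=
      steadyResponse_strictAntiOn ha hb (Nat.one_le_iff_ne_zero.mp hh) hx1.le hx0.le hx1x0

/-- Under condition (cond0), `f(x̄₀)g′(x̄₀) − f′(x̄₀)g(x̄₀) < −1`, there exists a
non-homogeneous stationary state `x̄₁ < x̄₀ < x̄₂` of the two-cell periodic reduced
Hes1–Notch system. -/
theorem nonhomogeneous_stationary_state_exists
    (a b : ℝ) (ha : 0 < a) (hb : 0 < b) (k h : ℕ) (hk : 1 ≤ k) (hh : 1 ≤ h)
    (x0 : ℝ) (hx0 : x0 ∈ Set.Ioo (0 : ℝ) 1)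
    (hfix : fHill a k x0 * gHill b h x0 = x0)
    (hcond : fHill a k x0 * deriv (gHill b h) x0 - deriv (fHill a k) x0 * gHill b h x0 < -1) :
    ∃ x1 x2 : ℝ, 0 < x1 ∧ x1 < x0 ∧ x0 < x2 ∧ x2 < 1 ∧
      x1 = gHill b h x2 * fHill a k x1 ∧ x2 = gHill b h x1 * fHill a k x2 :=
  nonhomogeneous_stationary_state_exists_general a b ha hb k h hh x0 hx0 hfix hcond
end

section
/- Let ψ : [0,1] → ℝ be continuous with ψ(0) > 0 and ψ(1) < 1, suppose c ∈ (0,1) satisfies ψ(c) = c, and suppose ψ is differentiable at c with ψ′(c) > 1. Then there exist points x̄₁ ∈ (0, c) and x̄₂ ∈ (c, 1) with ψ(x̄₁) = x̄₁ and ψ(x̄₂) = x̄₂. -/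
/-- Fixed-point lemma: if `ψ` is continuous on `[0,1]` with `ψ(0) > 0`, `ψ(1) < 1`,
has a fixed point `c ∈ (0,1)`, and is differentiable at `c` with `ψ′(c) > 1`, then `ψ`
has further fixed points `x̄₁ ∈ (0,c)` and `x̄₂ ∈ (c,1)`. -/
theorem fixed_points_flanking
    (ψ : ℝ → ℝ) (hcont : ContinuousOn ψ (Set.Icc 0 1))
    (h0 : 0 < ψ 0) (h1 : ψ 1 < 1)
    (c : ℝ) (hc : c ∈ Set.Ioo (0 : ℝ) 1) (hfix : ψ c = c)
    (hdiff : DifferentiableAt ℝ ψ c) (hderiv : 1 < deriv ψ c) :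
    (∃ x1 ∈ Set.Ioo 0 c, ψ x1 = x1) ∧ (∃ x2 ∈ Set.Ioo c 1, ψ x2 = x2) := by
  obtain ⟨hc0, hc1⟩ := hc
  set g : ℝ → ℝ := fun x => ψ x - x with hg
  have hgcont : ContinuousOn g (Set.Icc 0 1) := hcont.sub continuousOn_id
  have hgc : g c = 0 := by simp [hg, hfix]
  have hgd : HasDerivAt g (deriv ψ c - 1) c :=
    hdiff.hasDerivAt.sub (hasDerivAt_id c)
  -- slope tends to g'(c) > 0
  have hslope : Filter.Tendsto (slope g c) (nhdsWithin c {c}ᶜ) (nhds (deriv ψ c - 1)) :=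
    hasDerivAt_iff_tendsto_slope.mp hgd
  have hpos : ∀ᶠ x in nhdsWithin c {c}ᶜ, 0 < slope g c x :=
    hslope.eventually (eventually_gt_nhds (by linarith))
  -- pick a ∈ (0,c) with g a < 0
  have ha : ∃ a ∈ Set.Ioo 0 c, g a < 0 := by
    have h1' : ∀ᶠ x in nhdsWithin c (Set.Iio c), 0 < slope g c x :=
      hpos.filter_mono (nhdsWithin_mono c (fun x hx => ne_of_lt hx))
    have h2' : Set.Ioo 0 c ∈ nhdsWithin c (Set.Iio c) :=
      mem_nhdsWithin.2 ⟨Set.Ioi 0, isOpen_Ioi, hc0, fun x hx => ⟨hx.1, hx.2⟩⟩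
    obtain ⟨x, hsl, hx⟩ :=
      ((h1'.and (Filter.eventually_of_mem h2' (fun x hx => hx))).exists)
    refine ⟨x, hx, ?_⟩
    have hxc : x - c < 0 := by linarith [hx.2]
    rw [slope_def_field, hgc, sub_zero] at hsl
    rcases div_pos_iff.mp hsl with ⟨_, h⟩ | ⟨h, _⟩
    · linarith
    · exact h
  -- pick b ∈ (c,1) with g b > 0
  have hb : ∃ b ∈ Set.Ioo c 1, 0 < g b := by
    have h1' : ∀ᶠ x in nhdsWithin c (Set.Ioi c), 0 < slope g c x :=
      hpos.filter_mono (nhdsWithin_mono c (fun x hx => ne_of_gt hx))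
    have h2' : Set.Ioo c 1 ∈ nhdsWithin c (Set.Ioi c) :=
      mem_nhdsWithin.2 ⟨Set.Iio 1, isOpen_Iio, hc1, fun x hx => ⟨hx.2, hx.1⟩⟩
    obtain ⟨x, hsl, hx⟩ :=
      ((h1'.and (Filter.eventually_of_mem h2' (fun x hx => hx))).exists)
    refine ⟨x, hx, ?_⟩
    have hxc : 0 < x - c := by linarith [hx.1]
    rw [slope_def_field, hgc, sub_zero] at hsl
    rcases div_pos_iff.mp hsl with ⟨h, _⟩ | ⟨_, h⟩
    · exact h
    · linarith
  obtain ⟨a, ha', hga⟩ := ha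
  obtain ⟨b, hb', hgb⟩ := hb
  constructor
  · have hsub : Set.Icc (0:ℝ) a ⊆ Set.Icc 0 1 :=
      Set.Icc_subset_Icc le_rfl (by linarith [ha'.2])
    have h0' : g 0 = ψ 0 - 0 := rfl
    have hiv := intermediate_value_Ioo' (le_of_lt ha'.1) (hgcont.mono hsub)
    have : (0:ℝ) ∈ Set.Ioo (g a) (g 0) := ⟨hga, by simp [hg]; linarith⟩
    obtain ⟨x, hx, hgx⟩ := hiv this
    exact ⟨x, ⟨hx.1, lt_trans hx.2 ha'.2⟩, by have := hgx; simp [hg] at this; linarith⟩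
  · have hsub : Set.Icc b 1 ⊆ Set.Icc 0 1 :=
      Set.Icc_subset_Icc (by linarith [hb'.1]) le_rfl
    have hiv := intermediate_value_Ioo' (le_of_lt hb'.2) (hgcont.mono hsub)
    have : (0:ℝ) ∈ Set.Ioo (g 1) (g b) := ⟨by simp [hg]; linarith, hgb⟩
    obtain ⟨x, hx, hgx⟩ := hiv this
    exact ⟨x, ⟨lt_trans hb'.1 hx.1, hx.2⟩, by have := hgx; simp [hg] at this; linarith⟩
end

section
/- Let x̄₀ ∈ (0,1) satisfy φ(x̄₀) = x̄₀, let N ≥ 3 be divisible by 3, and let J be the complex matrix indexed by (ℤ/N) × (ℤ/N) with every diagonal entry g(x̄₀)f′(x̄₀) − 1, entries g′(x̄₀)f(x̄₀)/6 at the six hexagonal-neighbour positions (l±1, j), (l, j±1), (l+1, j+1), (l−1, j−1) (indices mod N), and zeros elsewhere. Then J has a positive real eigenvalue if and only if f(x̄₀)g′(x̄₀)/2 − f′(x̄₀)g(x̄₀) < −1. -/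
/-- The Jacobian of the reduced Hes1–Notch model on a doubly periodic regular hexagonal
lattice indexed by `(ℤ/M) × (ℤ/N)`: diagonal entries `d`, entries `o` at the six
hexagonal-neighbour positions `(l±1, j)`, `(l, j±1)`, `(l+1, j+1)`, `(l−1, j−1)`
(indices mod `M` and mod `N`), zeros elsewhere. -/
noncomputable def hexJ (M N : ℕ) (d o : ℂ) :
    Matrix (ZMod M × ZMod N) (ZMod M × ZMod N) ℂ :=
  Matrix.of fun i j =>
    (if j = i then d else 0)
      + (if j = (i.1 + 1, i.2) then o else 0) + (if j = (i.1 - 1, i.2) then o else 0)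
      + (if j = (i.1, i.2 + 1) then o else 0) + (if j = (i.1, i.2 - 1) then o else 0)
      + (if j = (i.1 + 1, i.2 + 1) then o else 0) + (if j = (i.1 - 1, i.2 - 1) then o else 0)

open Matrix Polynomial Finset

namespace hexHelper

lemma charpoly_eval_eq {n : Type*} [Fintype n] [DecidableEq n]
    (M : Matrix n n ℂ) (t : ℂ) :
    (Matrix.charpoly M).eval t = (t • (1 : Matrix n n ℂ) - M).det := by
  have h1 : (Matrix.charmatrix M).map (Polynomial.eval t) = t • (1 : Matrix n n ℂ) - M := by
    ext i j
    by_cases hij : i = j <;>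
      simp [Matrix.charmatrix_apply, hij, Matrix.one_apply, Matrix.diagonal_apply,
        Matrix.smul_apply, Matrix.sub_apply]
  rw [Matrix.charpoly, ← h1, ← Polynomial.coe_evalRingHom, RingHom.map_det]
  rfl

lemma charpoly_isRoot_iff {n : Type*} [Fintype n] [DecidableEq n]
    (M : Matrix n n ℂ) (t : ℂ) :
    (Matrix.charpoly M).IsRoot t ↔
      ∃ v : n → ℂ, v ≠ 0 ∧ (t • (1 : Matrix n n ℂ) - M).mulVec v = 0 := by
  rw [Polynomial.IsRoot, charpoly_eval_eq, ← Matrix.exists_mulVec_eq_zero_iff]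

lemma hexJ_mulVec (N : ℕ) [NeZero N] (d o : ℂ) (v : ZMod N × ZMod N → ℂ)
    (i : ZMod N × ZMod N) :
    (hexJ N N d o).mulVec v i =
      d * v i + o * (v (i + (1, 0)) + v (i + (-1, 0)) + v (i + (0, 1)) + v (i + (0, -1))
        + v (i + (1, 1)) + v (i + (-1, -1))) := by
  have e1 : (i + ((1 : ZMod N), (0 : ZMod N))) = (i.1 + 1, i.2) := by simp [Prod.ext_iff]
  have e2 : (i + ((-1 : ZMod N), (0 : ZMod N))) = (i.1 - 1, i.2) := by
    simp [Prod.ext_iff, sub_eq_add_neg]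
  have e3 : (i + ((0 : ZMod N), (1 : ZMod N))) = (i.1, i.2 + 1) := by simp [Prod.ext_iff]
  have e4 : (i + ((0 : ZMod N), (-1 : ZMod N))) = (i.1, i.2 - 1) := by
    simp [Prod.ext_iff, sub_eq_add_neg]
  have e5 : (i + ((1 : ZMod N), (1 : ZMod N))) = (i.1 + 1, i.2 + 1) := by simp [Prod.ext_iff]
  have e6 : (i + ((-1 : ZMod N), (-1 : ZMod N))) = (i.1 - 1, i.2 - 1) := by
    simp [Prod.ext_iff, sub_eq_add_neg]
  rw [e1, e2, e3, e4, e5, e6]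
  simp only [hexJ, Matrix.mulVec, dotProduct, Matrix.of_apply, add_mul, ite_mul,
    zero_mul, Finset.sum_add_distrib, Finset.sum_ite_eq', Finset.mem_univ, if_true]
  ring

lemma fHill_pos (a : ℝ) (ha : 0 < a) (k : ℕ) (x : ℝ) (hx : 0 < x) : 0 < fHill a k x := by
  have h1 : 0 < a + x ^ k := by positivity
  simp only [fHill]
  positivity

lemma deriv_gHill_nonpos (b : ℝ) (hb : 0 < b) (h : ℕ) (x : ℝ) (hx : 0 < x) :
    deriv (gHill b h) x ≤ 0 := by
  have hden : (0 : ℝ) < 1 + b * x ^ h := by positivity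
  have hd : HasDerivAt (fun y : ℝ => 1 + b * y ^ h) (b * (h * x ^ (h - 1))) x := by
    simpa using ((hasDerivAt_pow h x).const_mul b).const_add 1
  have hinv : HasDerivAt (gHill b h) (-(b * (h * x ^ (h - 1))) / (1 + b * x ^ h) ^ 2) x := by
    have h2 : gHill b h = fun y : ℝ => (1 + b * y ^ h)⁻¹ := by
      funext y; simp [gHill, one_div]
    rw [h2]
    exact hd.inv hden.ne'
  rw [hinv.deriv]
  have hnum : 0 ≤ b * (h * x ^ (h - 1)) := by positivity
  have hsq : (0:ℝ) < (1 + b * x ^ h) ^ 2 := by positivity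
  exact div_nonpos_of_nonpos_of_nonneg (by linarith) hsq.le

noncomputable def eigvec (N : ℕ) (hdvd : 3 ∣ N) (ω : ℂ) : ZMod N × ZMod N → ℂ :=
  fun i => ω ^ ((ZMod.castHom hdvd (ZMod 3)) (i.1 + i.2)).val

lemma eigvec_shift (N : ℕ) [NeZero N] (hdvd : 3 ∣ N) (ω : ℂ) (h3 : ω ^ 3 = 1)
    (i : ZMod N × ZMod N) (c1 c2 : ZMod N) :
    eigvec N hdvd ω (i + (c1, c2)) =
      eigvec N hdvd ω i * ω ^ ((ZMod.castHom hdvd (ZMod 3)) (c1 + c2)).val := by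
  have key : ∀ m : ℕ, ω ^ (m % 3) = ω ^ m := by
    intro m
    conv_rhs => rw [← Nat.div_add_mod m 3]
    rw [pow_add, pow_mul, h3, one_pow, one_mul]
  have hval : ∀ c e : ZMod 3, ω ^ (c + e).val = ω ^ c.val * ω ^ e.val := by
    intro c e
    rw [ZMod.val_add, key, pow_add]
  show ω ^ ((ZMod.castHom hdvd (ZMod 3)) ((i + (c1, c2)).1 + (i + (c1, c2)).2)).val = _
  have harg : (i + (c1, c2)).1 + (i + (c1, c2)).2 = (i.1 + i.2) + (c1 + c2) := by
    simp only [Prod.fst_add, Prod.snd_add]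
    ring
  rw [harg, map_add, hval]
  rfl

end hexHelper

/-- On a doubly periodic regular hexagonal lattice of `N×N` cells with `3 ∣ N`, the
linearisation `J` of the reduced Hes1–Notch model around the homogeneous state `x̄₀` (with
diagonal entries `g(x̄₀)f′(x̄₀) − 1` and entries `g′(x̄₀)f(x̄₀)/6` at the six hexagonal
neighbours) has a positive real eigenvalue if and only if
`f(x̄₀)g′(x̄₀)/2 − f′(x̄₀)g(x̄₀) < −1`. -/
theorem hex_jacobian_unstable_iff
    (a b : ℝ) (ha : 0 < a) (hb : 0 < b) (k h : ℕ) (hk : 1 ≤ k) (hh : 1 ≤ h)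
    (x0 : ℝ) (hx0 : x0 ∈ Set.Ioo (0 : ℝ) 1)
    (hfix : fHill a k x0 * gHill b h x0 = x0)
    (N : ℕ) [NeZero N] (hN : 3 ≤ N) (hdvd : 3 ∣ N) :
    (∃ t : ℝ, 0 < t ∧
        (Matrix.charpoly (hexJ N N ((gHill b h x0 * deriv (fHill a k) x0 - 1 : ℝ) : ℂ)
          ((deriv (gHill b h) x0 * fHill a k x0 / 6 : ℝ) : ℂ))).IsRoot (t : ℂ)) ↔
      fHill a k x0 * deriv (gHill b h) x0 / 2 - deriv (fHill a k) x0 * gHill b h x0 < -1 := by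
  have hF : 0 < fHill a k x0 := hexHelper.fHill_pos a ha k x0 hx0.1
  have hG' : deriv (gHill b h) x0 ≤ 0 := hexHelper.deriv_gHill_nonpos b hb h x0 hx0.1
  set dR : ℝ := gHill b h x0 * deriv (fHill a k) x0 - 1 with hdR
  set oR : ℝ := deriv (gHill b h) x0 * fHill a k x0 / 6 with hoR
  have ho : oR ≤ 0 := by
    rw [hoR]
    have := mul_nonpos_iff.mpr (Or.inr ⟨hG', hF.le⟩)
    linarith
  have hcomm : dR - 3 * oR =
      -(fHill a k x0 * deriv (gHill b h) x0 / 2 - deriv (fHill a k) x0 * gHill b h x0) - 1 := by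
    rw [hdR, hoR]; ring
  constructor
  · -- positive eigenvalue implies instability inequality
    rintro ⟨t, ht, hroot⟩
    rw [hexHelper.charpoly_isRoot_iff] at hroot
    obtain ⟨v, hv0, hvec⟩ := hroot
    have heig : ∀ i, (hexJ N N (dR : ℂ) (oR : ℂ)).mulVec v i = (t : ℂ) * v i := by
      intro i
      have h1 := congrFun hvec i
      simp only [Matrix.sub_mulVec, Matrix.smul_mulVec, Matrix.one_mulVec,
        Pi.sub_apply, Pi.smul_apply, smul_eq_mul, Pi.zero_apply] at h1
      linear_combination -h1
    set T : ZMod N × ZMod N → ℂ := fun c => ∑ i, (starRingEnd ℂ) (v i) * v (i + c) with hT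
    have hT0 : ∀ c, (∑ i, (starRingEnd ℂ) (v i) * v (i + c)) = T c := fun c => by
      simp only [hT]
    have hT0' : T 0 = ∑ i, (starRingEnd ℂ) (v i) * v i := by
      simp only [hT, add_zero]
    have hTshift : ∀ (c e : ZMod N × ZMod N),
        (∑ i, (starRingEnd ℂ) (v (i + c)) * v (i + c + e)) = T e := by
      intro c e
      rw [← hT0 e]
      refine Fintype.sum_equiv (Equiv.addRight c) _ _ fun i => ?_
      simp [Equiv.coe_addRight]
    set A : ℝ := ∑ i, Complex.normSq (v i) with hA
    have hApos : 0 < A := by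
      obtain ⟨i0, hi0⟩ := Function.ne_iff.mp hv0
      refine lt_of_lt_of_le (Complex.normSq_pos.mpr hi0) ?_
      exact Finset.single_le_sum (fun i _ => Complex.normSq_nonneg (v i)) (Finset.mem_univ i0)
    have hAT : (A : ℂ) = T 0 := by
      rw [hA, hT0']
      push_cast
      exact Finset.sum_congr rfl fun i _ => Complex.normSq_eq_conj_mul_self
    set w : ZMod N × ZMod N → ℂ := fun i => v i + v (i + (-1, 0)) + v (i + (0, 1)) with hw
    set B : ℝ := ∑ i, Complex.normSq (w i) with hB
    have hBnn : 0 ≤ B := Finset.sum_nonneg fun i _ => Complex.normSq_nonneg _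
    have hBT : (B : ℂ) = 3 * T 0 +
        (T (1, 0) + T (-1, 0) + T (0, 1) + T (0, -1) + T (1, 1) + T (-1, -1)) := by
      have step1 : (B : ℂ) = ∑ i, (starRingEnd ℂ) (w i) * w i := by
        rw [hB]
        push_cast
        exact Finset.sum_congr rfl fun i _ => Complex.normSq_eq_conj_mul_self
      rw [step1]
      calc ∑ i, (starRingEnd ℂ) (w i) * w i
          = ∑ i, ((starRingEnd ℂ) (v i) * v i
              + (starRingEnd ℂ) (v i) * v (i + (-1, 0))
              + (starRingEnd ℂ) (v i) * v (i + (0, 1))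
              + (starRingEnd ℂ) (v (i + (-1, 0))) * v (i + (-1, 0) + (1, 0))
              + (starRingEnd ℂ) (v (i + (-1, 0))) * v (i + (-1, 0))
              + (starRingEnd ℂ) (v (i + (-1, 0))) * v (i + (-1, 0) + (1, 1))
              + (starRingEnd ℂ) (v (i + (0, 1))) * v (i + (0, 1) + (0, -1))
              + (starRingEnd ℂ) (v (i + (0, 1))) * v (i + (0, 1) + (-1, -1))
              + (starRingEnd ℂ) (v (i + (0, 1))) * v (i + (0, 1))) := by
            refine Finset.sum_congr rfl fun i _ => ?_
            have g2 : i + (-1, 0) + (1, 0) = i := by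
              rw [add_assoc]
              have : ((-1 : ZMod N), (0 : ZMod N)) + (1, 0) = 0 := by simp [Prod.ext_iff]
              rw [this, add_zero]
            have g4 : i + (-1, 0) + (1, 1) = i + (0, 1) := by
              rw [add_assoc]
              have : ((-1 : ZMod N), (0 : ZMod N)) + (1, 1) = (0, 1) := by simp [Prod.ext_iff]
              rw [this]
            have g5 : i + (0, 1) + (0, -1) = i := by
              rw [add_assoc]
              have : ((0 : ZMod N), (1 : ZMod N)) + (0, -1) = 0 := by simp [Prod.ext_iff]
              rw [this, add_zero]
            have g6 : i + (0, 1) + (-1, -1) = i + (-1, 0) := by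
              rw [add_assoc]
              have : ((0 : ZMod N), (1 : ZMod N)) + (-1, -1) = (-1, 0) := by simp [Prod.ext_iff]
              rw [this]
            rw [g2, g4, g5, g6]
            simp only [hw, map_add]
            ring
        _ = (∑ i, (starRingEnd ℂ) (v i) * v i)
              + (∑ i, (starRingEnd ℂ) (v i) * v (i + (-1, 0)))
              + (∑ i, (starRingEnd ℂ) (v i) * v (i + (0, 1)))
              + (∑ i, (starRingEnd ℂ) (v (i + (-1, 0))) * v (i + (-1, 0) + (1, 0)))
              + (∑ i, (starRingEnd ℂ) (v (i + (-1, 0))) * v (i + (-1, 0)))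
              + (∑ i, (starRingEnd ℂ) (v (i + (-1, 0))) * v (i + (-1, 0) + (1, 1)))
              + (∑ i, (starRingEnd ℂ) (v (i + (0, 1))) * v (i + (0, 1) + (0, -1)))
              + (∑ i, (starRingEnd ℂ) (v (i + (0, 1))) * v (i + (0, 1) + (-1, -1)))
              + (∑ i, (starRingEnd ℂ) (v (i + (0, 1))) * v (i + (0, 1))) := by
            simp only [Finset.sum_add_distrib]
        _ = 3 * T 0 + (T (1, 0) + T (-1, 0) + T (0, 1) + T (0, -1) + T (1, 1) + T (-1, -1)) := by
            have q1 : (∑ i, (starRingEnd ℂ) (v (i + ((-1 : ZMod N), (0 : ZMod N))))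
                * v (i + (-1, 0))) = T 0 := by
              have := hTshift (-1, 0) 0
              simpa [add_zero] using this
            have q2 : (∑ i, (starRingEnd ℂ) (v (i + ((0 : ZMod N), (1 : ZMod N))))
                * v (i + (0, 1))) = T 0 := by
              have := hTshift (0, 1) 0
              simpa [add_zero] using this
            rw [hT0 (-1, 0), hT0 (0, 1), hTshift (-1, 0) (1, 0), q1,
              hTshift (-1, 0) (1, 1), hTshift (0, 1) (0, -1), hTshift (0, 1) (-1, -1), q2,
              ← hT0']
            ring
    have hMain : (t : ℂ) * T 0 = (dR : ℂ) * T 0 +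
        (oR : ℂ) * (T (1, 0) + T (-1, 0) + T (0, 1) + T (0, -1) + T (1, 1) + T (-1, -1)) := by
      calc (t : ℂ) * T 0 = ∑ i, (starRingEnd ℂ) (v i) * ((t : ℂ) * v i) := by
            rw [hT0', Finset.mul_sum]
            exact Finset.sum_congr rfl fun i _ => by ring
        _ = ∑ i, (starRingEnd ℂ) (v i) * ((hexJ N N (dR : ℂ) (oR : ℂ)).mulVec v i) := by
            exact Finset.sum_congr rfl fun i _ => by rw [heig i]
        _ = ∑ i, ((dR : ℂ) * ((starRingEnd ℂ) (v i) * v i)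
              + ((oR : ℂ) * ((starRingEnd ℂ) (v i) * v (i + (1, 0)))
              + (oR : ℂ) * ((starRingEnd ℂ) (v i) * v (i + (-1, 0)))
              + (oR : ℂ) * ((starRingEnd ℂ) (v i) * v (i + (0, 1)))
              + (oR : ℂ) * ((starRingEnd ℂ) (v i) * v (i + (0, -1)))
              + (oR : ℂ) * ((starRingEnd ℂ) (v i) * v (i + (1, 1)))
              + (oR : ℂ) * ((starRingEnd ℂ) (v i) * v (i + (-1, -1))))) := by
            refine Finset.sum_congr rfl fun i _ => ?_
            rw [hexHelper.hexJ_mulVec]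
            ring
        _ = (dR : ℂ) * T 0 +
            (oR : ℂ) * (T (1, 0) + T (-1, 0) + T (0, 1) + T (0, -1) + T (1, 1) + T (-1, -1)) := by
            simp only [Finset.sum_add_distrib, ← Finset.mul_sum]
            rw [hT0 (1, 0), hT0 (-1, 0), hT0 (0, 1), hT0 (0, -1), hT0 (1, 1), hT0 (-1, -1),
              ← hT0']
            ring
    have hfinal : (t : ℂ) * (A : ℂ) = (dR : ℂ) * (A : ℂ) + (oR : ℂ) * ((B : ℂ) - 3 * (A : ℂ)) := by
      linear_combination hMain + (-(oR : ℂ)) * hBT + ((t : ℂ) - (dR : ℂ) + 3 * (oR : ℂ)) * hAT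
    have hreal : t * A = dR * A + oR * (B - 3 * A) := by exact_mod_cast hfinal
    have hpos : 0 < dR - 3 * oR := by
      nlinarith [mul_nonneg (neg_nonneg.mpr ho) hBnn, mul_pos ht hApos]
    linarith [hcomm, hpos]
  · -- instability inequality implies positive eigenvalue
    intro hE
    have ht : 0 < dR - 3 * oR := by rw [hcomm]; linarith
    refine ⟨dR - 3 * oR, ht, ?_⟩
    rw [hexHelper.charpoly_isRoot_iff]
    obtain ⟨ω, h3, hsum⟩ : ∃ z : ℂ, z ^ 3 = 1 ∧ 1 + z + z ^ 2 = 0 := by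
      have hp := Complex.isPrimitiveRoot_exp 3 (by norm_num)
      exact ⟨_, hp.pow_eq_one, by
        simpa [Finset.sum_range_succ] using hp.geom_sum_eq_zero (by norm_num)⟩
    set v : ZMod N × ZMod N → ℂ := hexHelper.eigvec N hdvd ω with hv
    have p1 : ∀ i : ZMod N × ZMod N, v (i + (1, 0)) = v i * ω := by
      intro i
      rw [hv, hexHelper.eigvec_shift N hdvd ω h3 i 1 0, add_zero, _root_.map_one,
        show ((1 : ZMod 3)).val = 1 from by decide, pow_one]
    have p2 : ∀ i : ZMod N × ZMod N, v (i + (-1, 0)) = v i * ω ^ 2 := by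
      intro i
      rw [hv, hexHelper.eigvec_shift N hdvd ω h3 i (-1) 0, add_zero, _root_.map_neg,
        _root_.map_one, show ((-1 : ZMod 3)).val = 2 from by decide]
    have p3 : ∀ i : ZMod N × ZMod N, v (i + (0, 1)) = v i * ω := by
      intro i
      rw [hv, hexHelper.eigvec_shift N hdvd ω h3 i 0 1, zero_add, _root_.map_one,
        show ((1 : ZMod 3)).val = 1 from by decide, pow_one]
    have p4 : ∀ i : ZMod N × ZMod N, v (i + (0, -1)) = v i * ω ^ 2 := by
      intro i
      rw [hv, hexHelper.eigvec_shift N hdvd ω h3 i 0 (-1), zero_add, _root_.map_neg,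
        _root_.map_one, show ((-1 : ZMod 3)).val = 2 from by decide]
    have p5 : ∀ i : ZMod N × ZMod N, v (i + (1, 1)) = v i * ω ^ 2 := by
      intro i
      rw [hv, hexHelper.eigvec_shift N hdvd ω h3 i 1 1, _root_.map_add, _root_.map_one,
        show ((1 : ZMod 3) + 1).val = 2 from by decide]
    have p6 : ∀ i : ZMod N × ZMod N, v (i + (-1, -1)) = v i * ω := by
      intro i
      rw [hv, hexHelper.eigvec_shift N hdvd ω h3 i (-1) (-1), _root_.map_add, _root_.map_neg,
        _root_.map_one, show ((-1 : ZMod 3) + -1).val = 1 from by decide, pow_one]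
    refine ⟨v, ?_, ?_⟩
    · intro h0
      have h1 := congrFun h0 (0, 0)
      rw [hv] at h1
      simp [hexHelper.eigvec] at h1
    · funext i
      have lhs : ((((dR - 3 * oR : ℝ) : ℂ) • (1 : Matrix (ZMod N × ZMod N) (ZMod N × ZMod N) ℂ)
            - hexJ N N (dR : ℂ) (oR : ℂ)).mulVec v) i
          = ((dR - 3 * oR : ℝ) : ℂ) * v i - ((dR : ℂ) * v i + (oR : ℂ) * (v (i + (1, 0))
            + v (i + (-1, 0)) + v (i + (0, 1)) + v (i + (0, -1)) + v (i + (1, 1))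
            + v (i + (-1, -1)))) := by
        rw [Matrix.sub_mulVec, Matrix.smul_mulVec, Matrix.one_mulVec]
        simp only [Pi.sub_apply, Pi.smul_apply, smul_eq_mul]
        rw [hexHelper.hexJ_mulVec]
      rw [lhs, p1 i, p2 i, p3 i, p4 i, p5 i, p6 i]
      push_cast
      simp only [Pi.zero_apply]
      linear_combination (-3 * (oR : ℂ) * v i) * hsum
end
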